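/- arXiv:2508.17570 — 3 statements merged into one kernel-verified Lean document; each statement's English description precedes it below -/
import Mathlib

section
/- Let F be an algebraically closed field, m ≥ 2, and f ∈ F[x_1,...,x_m] a polynomial in m variables. Then the evaluation map F^m → F, (a_1,...,a_m) ↦ f(a_1,...,a_m), is not injective. -/
open MvPolynomial

lemma eval_aeval_poly {F : Type*} [CommSemiring F] {m : ℕ}
    (f : MvPolynomial (Fin m) F) (g : Fin m → Polynomial F) (t : F) :
    Polynomial.eval t (MvPolynomial.aeval g f)
      = MvPolynomial.eval (fun i => Polynomial.eval t (g i)) f := by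
  induction f using MvPolynomial.induction_on with
  | C a => simp
  | add p q hp hq => simp [hp, hq]
  | mul_X p i hp => simp [hp]

theorem stmt2 (F : Type*) [Field F] [IsAlgClosed F] (m : ℕ) (hm : 2 ≤ m)
    (f : MvPolynomial (Fin m) F) :
    ¬ Function.Injective fun v : Fin m → F => MvPolynomial.eval v f := by
  intro hinj
  have h0 : (0 : ℕ) < m := by omega
  have h1 : (1 : ℕ) < m := by omega
  set i0 : Fin m := ⟨0, h0⟩
  set i1 : Fin m := ⟨1, h1⟩
  have hne : i0 ≠ i1 := by simp [i0, i1, Fin.ext_iff]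
  -- points
  set v : F → Fin m → F := fun t i => if i = i1 then t else 0 with hv
  set w : Fin m → F := fun i => if i = i0 then 1 else 0 with hw
  set P : Polynomial F :=
    MvPolynomial.aeval (fun i => if i = i1 then Polynomial.X else 0) f with hP
  have hPe : ∀ t, P.eval t = MvPolynomial.eval (v t) f := by
    intro t
    rw [hP, eval_aeval_poly]
    have hfun : (fun i => Polynomial.eval t (if i = i1 then Polynomial.X else 0)) = v t := by
      funext i
      by_cases h : i = i1 <;> simp [hv, h]
    rw [hfun]
  by_cases hc : ∀ t : F, P.eval t = P.eval 0
  · -- constant: v 0 and v 1 collide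
    have := hinj (a₁ := v 1) (a₂ := v 0) (by
      simp only []
      rw [← hPe, ← hPe, hc 1])
    have : (v 1) i1 = (v 0) i1 := by rw [this]
    simp [hv] at this
  · push_neg at hc
    obtain ⟨t0, ht0⟩ := hc
    set c : F := MvPolynomial.eval w f with hcdef
    have hdeg : (P - Polynomial.C c).degree ≠ 0 := by
      intro hd
      have hnd : (P - Polynomial.C c).natDegree = 0 :=
        Polynomial.natDegree_eq_zero_iff_degree_le_zero.mpr (le_of_eq hd)
      rw [Polynomial.natDegree_sub_C] at hnd
      apply ht0
      have := Polynomial.eq_C_of_natDegree_eq_zero hnd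
      rw [this]; simp
    obtain ⟨x, hx⟩ := IsAlgClosed.exists_root _ hdeg
    have hx' : P.eval x = c := by
      have := hx
      rw [Polynomial.IsRoot, Polynomial.eval_sub, Polynomial.eval_C, sub_eq_zero] at this
      exact this
    have heq : MvPolynomial.eval (v x) f = MvPolynomial.eval w f := by
      rw [← hPe, hx', hcdef]
    have := hinj (a₁ := v x) (a₂ := w) heq
    have : (v x) i0 = w i0 := by rw [this]
    simp [hv, hw, hne] at this
end

section
/- Let A be a unital associative algebra over a field F containing a nonzero element e with e² = 0, and let f ∈ F[x]. If the evaluation map A → A, a ↦ f(a), is injective, then for every λ ∈ F the polynomial f − λ has only simple roots in F. -/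
open Polynomial

theorem stmt9 (F A : Type*) [Field F] [Ring A] [Algebra F A]
    (e : A) (hne : e ≠ 0) (he : e * e = 0) (f : Polynomial F)
    (hinj : Function.Injective fun a : A => Polynomial.aeval a f) :
    ∀ lam : F, ∀ b : F, (f - Polynomial.C lam).rootMultiplicity b ≤ 1 := by
  intro lam b
  by_contra h
  push_neg at h
  have hdvd : (X - C b) ^ 2 ∣ f - C lam := by
    have := pow_rootMultiplicity_dvd (f - C lam) b
    exact dvd_trans (pow_dvd_pow _ h) this
  obtain ⟨g, hg⟩ := hdvd
  set a : A := algebraMap F A b + e with ha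
  have h1 : Polynomial.aeval a (X - C b) = e := by
    simp [ha]
  have h2 : Polynomial.aeval a f = algebraMap F A lam := by
    have : f = C lam + (X - C b) ^ 2 * g := by rw [← hg]; ring
    rw [this]
    simp [pow_two, h1, mul_assoc]
    rw [← mul_assoc, he, zero_mul]
  have h3 : Polynomial.aeval (algebraMap F A b) f = algebraMap F A lam := by
    have : f = C lam + (X - C b) ^ 2 * g := by rw [← hg]; ring
    rw [this]
    simp
  have := hinj (h2.trans h3.symm)
  apply hne
  have : a = algebraMap F A b := this
  rw [ha] at this
  have := add_left_cancel (this.trans (add_zero (algebraMap F A b)).symm)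
  exact this
end

section
/- Let F be a field, f ∈ F[x] with f(x) − f(0) = x·h(x) where h(0) ≠ 0, and let q ∈ F[x] be an irreducible factor of h of degree d. If n ≥ d and n ≥ 2, then the evaluation map M_n(F) → M_n(F), A ↦ f(A), is not injective. -/
/-!
A root `ξ` of `q` in `F[x]/(q)` is a root of `h`, hence nonzero as `h(0) ≠ 0`.
Multiplication by `ξ` on the `d`-dimensional space `F[x]/(q)`, extended by zero to an
`n`-dimensional space, is a nonzero matrix `A` with `A h(A) = 0`, i.e. `f(A) = f(0)`.
-/

open Polynomial Module

theorem exists_matrix_ne_zero_aeval_eq_zero {F K : Type*} [Field F] [Ring K] [Algebra F K]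
    [FiniteDimensional F K] {x : K} (hx : x ≠ 0) {p : F[X]} (hp0 : p.coeff 0 = 0)
    (hpx : aeval x p = 0) {n : ℕ} (hn : finrank F K ≤ n) :
    ∃ M : Matrix (Fin n) (Fin n) F, M ≠ 0 ∧ aeval M p = 0 := by
  let W := Fin (n - finrank F K) → F
  let T : Module.End F (K × W) := LinearMap.prodMapAlgHom F K W (Algebra.lmul F K x, 0)
  have hT : T ≠ 0 := by
    intro hT0
    have hT1 : T (1, 0) = (x, 0) := by simp [T]
    rw [hT0] at hT1
    exact hx (congrArg Prod.fst hT1).symm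
  have hTp : aeval T p = 0 := by
    rw [aeval_algHom_apply, aeval_prod_apply, aeval_algHom_apply, hpx,
      ← coeff_zero_eq_aeval_zero', hp0]
    simp only [map_zero, Prod.mk_zero_zero]
  have hdim : finrank F (K × W) = n := by
    rw [finrank_prod, finrank_fin_fun]
    omega
  let e := LinearMap.toMatrixAlgEquiv (finBasisOfFinrankEq F (K × W) hdim)
  refine ⟨e T, (map_ne_zero_iff e e.injective).mpr hT, ?_⟩
  rw [aeval_algEquiv, AlgHom.comp_apply, hTp, map_zero]

theorem stmt11_general (F : Type*) [Field F] (f h q : Polynomial F)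
    (hfh : f - Polynomial.C (f.eval 0) = Polynomial.X * h)
    (h0 : h.eval 0 ≠ 0) (hq : Irreducible q) (hqh : q ∣ h)
    (n : ℕ) (hnd : q.natDegree ≤ n) :
    ¬ Function.Injective fun A : Matrix (Fin n) (Fin n) F => Polynomial.aeval A f := by
  have : Fact (Irreducible q) := ⟨hq⟩
  let pb := AdjoinRoot.powerBasis hq.ne_zero
  have : FiniteDimensional F (AdjoinRoot q) := pb.finite
  let x := AdjoinRoot.root q
  have hxh : aeval x h = 0 := by rwa [AdjoinRoot.aeval_eq, AdjoinRoot.mk_eq_zero]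
  have hx : x ≠ 0 := by
    rintro hx0
    rw [hx0, ← coeff_zero_eq_aeval_zero', coeff_zero_eq_eval_zero, map_eq_zero] at hxh
    exact h0 hxh
  obtain ⟨M, hM, hMh⟩ := exists_matrix_ne_zero_aeval_eq_zero hx (p := X * h) (n := n) (by simp)
    (by simp [hxh]) (by rwa [pb.finrank, AdjoinRoot.powerBasis_dim])
  refine fun hinj => hM (@hinj M 0 ?_)
  have hMf := congrArg (aeval M) hfh
  rw [map_sub, aeval_C, hMh] at hMf
  rw [sub_eq_zero, ← coeff_zero_eq_eval_zero, coeff_zero_eq_aeval_zero'] at hMf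
  exact hMf

theorem stmt11 (F : Type*) [Field F] (f h q : Polynomial F)
    (hfh : f - Polynomial.C (f.eval 0) = Polynomial.X * h)
    (h0 : h.eval 0 ≠ 0) (hq : Irreducible q) (hqh : q ∣ h)
    (n : ℕ) (hn : 2 ≤ n) (hnd : q.natDegree ≤ n) :
    ¬ Function.Injective fun A : Matrix (Fin n) (Fin n) F => Polynomial.aeval A f :=
  stmt11_general F f h q hfh h0 hq hqh n hnd
end
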